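/- arXiv:0804.4042 — 3 statements merged into one kernel-verified Lean document; each statement's English description precedes it below -/
import Mathlib

section
/- Let C be a binary linear code with even minimum distance d, and let c, c' be distinct codewords of weight d in C. If c and c' have a common larger half v ∈ LH^-(c) ∩ LH^-(c'), then v = c ∩ c' (the vector with support S(c) ∩ S(c')) and l(c) = l(c'), where l(x) = min S(x); moreover the codeword c + c', which also has weight d, has no common larger half with c, since l(c + c') ≠ l(c). -/
/-- Support of a binary vector: the set of nonzero coordinates. -/
def supp {n : ℕ} (x : Fin n → ZMod 2) : Finset (Fin n) :=
  Finset.univ.filter (fun i => x i ≠ 0)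

/-- Hamming weight. -/
def wt {n : ℕ} (x : Fin n → ZMod 2) : ℕ := (supp x).card

/-- Numerical value v(x) = Σ_{i=1}^n x_i 2^(n-i) (0-based: exponent n-1-i). -/
def nval {n : ℕ} (x : Fin n → ZMod 2) : ℕ :=
  ∑ i : Fin n, (x i).val * 2 ^ (n - 1 - (i : ℕ))

/-- The total order ⪯ : first by weight, ties broken by numerical value. -/
def ple {n : ℕ} (x y : Fin n → ZMod 2) : Prop :=
  wt x < wt y ∨ (wt x = wt y ∧ nval x ≤ nval y)

/-- The strict version ≺ of ⪯. -/
def plt {n : ℕ} (x y : Fin n → ZMod 2) : Prop := ple x y ∧ x ≠ y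

/-- Covering order: x ⊆ y iff S(x) ⊆ S(y). -/
def covers {n : ℕ} (x y : Fin n → ZMod 2) : Prop := supp x ⊆ supp y

/-- v is the coset leader of its coset of C, i.e. the ⪯-minimum element
(u ranges over the coset of v: u + v ∈ C). -/
def IsCosetLeader {n : ℕ} (C : Submodule (ZMod 2) (Fin n → ZMod 2))
    (v : Fin n → ZMod 2) : Prop :=
  ∀ u, u + v ∈ C → ple v u

/-- E⁰(C): the set of correctable errors (coset leaders). -/
def E0 {n : ℕ} (C : Submodule (ZMod 2) (Fin n → ZMod 2)) : Set (Fin n → ZMod 2) :=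
  {v | IsCosetLeader C v}

/-- E¹(C): the set of uncorrectable errors. -/
def E1 {n : ℕ} (C : Submodule (ZMod 2) (Fin n → ZMod 2)) : Set (Fin n → ZMod 2) :=
  {v | ¬ IsCosetLeader C v}

/-- M¹(C): the ⊆-minimal elements of E¹(C). -/
def M1 {n : ℕ} (C : Submodule (ZMod 2) (Fin n → ZMod 2)) : Set (Fin n → ZMod 2) :=
  {v ∈ E1 C | ∀ u ∈ E1 C, covers u v → u = v}

/-- v is a larger half of c: v is ⊆-minimal among vectors u with u + c ≺ u. -/
def IsLH {n : ℕ} (c v : Fin n → ZMod 2) : Prop :=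
  plt (v + c) v ∧ ∀ u, plt (u + c) u → covers u v → u = v

/-- LH(c): the set of larger halves of c. -/
def LH {n : ℕ} (c : Fin n → ZMod 2) : Set (Fin n → ZMod 2) := {v | IsLH c v}

/-- LH(U) = ∪_{c ∈ U} LH(c). -/
def LHset {n : ℕ} (U : Set (Fin n → ZMod 2)) : Set (Fin n → ZMod 2) :=
  ⋃ c ∈ U, LH c

/-- LH⁻(c): larger halves of c of weight w(c)/2 (for even-weight c). -/
def LHm {n : ℕ} (c : Fin n → ZMod 2) : Set (Fin n → ZMod 2) :=
  {v ∈ LH c | 2 * wt v = wt c}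

/-- A_i(U): elements of U of weight i. -/
def Aw {n : ℕ} (U : Set (Fin n → ZMod 2)) (i : ℕ) : Set (Fin n → ZMod 2) :=
  {v ∈ U | wt v = i}

/-- C has minimum distance d. -/
def HasMinDist {n : ℕ} (C : Submodule (ZMod 2) (Fin n → ZMod 2)) (d : ℕ) : Prop :=
  (∃ c ∈ C, c ≠ 0 ∧ wt c = d) ∧ ∀ c ∈ C, c ≠ 0 → d ≤ wt c

/-- T is a trial set for C. -/
def IsTrialSet {n : ℕ} (C : Submodule (ZMod 2) (Fin n → ZMod 2))
    (T : Set (Fin n → ZMod 2)) : Prop :=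
  T ⊆ (C : Set (Fin n → ZMod 2)) \ {0} ∧ M1 C ⊆ LHset T

/-- l(x) = min S(x), the leftmost nonzero coordinate (⊤ if x = 0). -/
def lm {n : ℕ} (x : Fin n → ZMod 2) : WithTop (Fin n) := (supp x).min

/-- The coordinatewise "and" of two vectors: support is S(x) ∩ S(y). -/
def vand {n : ℕ} (x y : Fin n → ZMod 2) : Fin n → ZMod 2 := fun i => x i * y i

section Helpers

variable {n : ℕ}

lemma mem_supp {x : Fin n → ZMod 2} {i : Fin n} : i ∈ supp x ↔ x i ≠ 0 := by
  simp [supp]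

lemma wt_eq_zero_iff {x : Fin n → ZMod 2} : wt x = 0 ↔ x = 0 := by
  constructor
  · intro h
    have hs : supp x = ∅ := Finset.card_eq_zero.mp h
    funext i
    by_contra hi
    have : i ∈ supp x := mem_supp.mpr hi
    simp [hs] at this
  · intro h; subst h
    have : supp (0 : Fin n → ZMod 2) = ∅ := by
      ext i; simp [supp]
    simp [wt, this]

lemma zmod2_val_one {a : ZMod 2} (h : a ≠ 0) : a.val = 1 := by revert a; decide

lemma wt_add_of_disj {x y : Fin n → ZMod 2} (h : ∀ i, x i = 0 ∨ y i = 0) :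
    wt (x + y) = wt x + wt y := by
  have hsupp : supp (x + y) = supp x ∪ supp y := by
    ext i
    have : ∀ a b : ZMod 2, (a = 0 ∨ b = 0) → (a + b ≠ 0 ↔ (a ≠ 0 ∨ b ≠ 0)) := by decide
    simp only [mem_supp, Finset.mem_union, Pi.add_apply]
    exact this _ _ (h i)
  have hdisj : Disjoint (supp x) (supp y) := by
    rw [Finset.disjoint_left]
    intro i hix hiy
    rcases h i with h0 | h0
    · exact mem_supp.mp hix h0
    · exact mem_supp.mp hiy h0
  rw [wt, hsupp, Finset.card_union_of_disjoint hdisj]; rfl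

lemma nval_add_of_disj {x y : Fin n → ZMod 2} (h : ∀ i, x i = 0 ∨ y i = 0) :
    nval (x + y) = nval x + nval y := by
  unfold nval
  rw [← Finset.sum_add_distrib]
  apply Finset.sum_congr rfl
  intro i _
  have : ∀ a b : ZMod 2, (a = 0 ∨ b = 0) → (a + b).val = a.val + b.val := by decide
  rw [Pi.add_apply, this _ _ (h i), add_mul]

lemma sum_two_pow_lt (k : ℕ) : ∑ j ∈ Finset.range k, 2 ^ j < 2 ^ k := by
  induction k with
  | zero => simp
  | succ k ih =>
    rw [Finset.sum_range_succ]
    have h2 : 2 ^ (k + 1) = 2 ^ k + 2 ^ k := by rw [pow_succ]; ring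
    omega

lemma nval_lt {a b : Fin n → ZMod 2} (m : Fin n) (hma : a m ≠ 0)
    (hb : ∀ i : Fin n, b i ≠ 0 → m < i) : nval b < nval a := by
  have h1 : 2 ^ (n - 1 - (m : ℕ)) ≤ nval a := by
    have := Finset.single_le_sum
      (f := fun i : Fin n => (a i).val * 2 ^ (n - 1 - (i : ℕ)))
      (fun i _ => Nat.zero_le _) (Finset.mem_univ m)
    rwa [zmod2_val_one hma, one_mul] at this
  have h2 : nval b < 2 ^ (n - 1 - (m : ℕ)) := by
    have e1 : nval b = ∑ i ∈ supp b, (b i).val * 2 ^ (n - 1 - (i : ℕ)) := by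
      refine (Finset.sum_subset (Finset.subset_univ _) ?_).symm
      intro i _ hi
      have : b i = 0 := by
        by_contra hbi; exact hi (mem_supp.mpr hbi)
      simp [this]
    have e2 : ∑ i ∈ supp b, (b i).val * 2 ^ (n - 1 - (i : ℕ))
        = ∑ i ∈ supp b, 2 ^ (n - 1 - (i : ℕ)) := by
      apply Finset.sum_congr rfl
      intro i hi
      rw [zmod2_val_one (mem_supp.mp hi), one_mul]
    have e3 : ∑ i ∈ supp b, 2 ^ (n - 1 - (i : ℕ))
        = ∑ j ∈ (supp b).image (fun i : Fin n => n - 1 - (i : ℕ)), 2 ^ j := by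
      refine (Finset.sum_image ?_).symm
      intro i _ j _ hij
      have hi := i.isLt; have hj := j.isLt
      have hij' : n - 1 - (i : ℕ) = n - 1 - (j : ℕ) := hij
      exact Fin.ext (by omega)
    rw [e1, e2, e3]
    calc ∑ j ∈ (supp b).image (fun i : Fin n => n - 1 - (i : ℕ)), 2 ^ j
        ≤ ∑ j ∈ Finset.range (n - 1 - (m : ℕ)), 2 ^ j := by
          apply Finset.sum_le_sum_of_subset
          intro j hj
          rw [Finset.mem_image] at hj
          obtain ⟨i, hi, rfl⟩ := hj
          have h1 := hb i (mem_supp.mp hi)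
          have h2 := i.isLt; have h3 := m.isLt
          have h4 : (m : ℕ) < (i : ℕ) := h1
          rw [Finset.mem_range]; omega
      _ < 2 ^ (n - 1 - (m : ℕ)) := sum_two_pow_lt _
  omega

lemma lh_subset {c v : Fin n → ZMod 2} (hc : c ≠ 0) (h : IsLH c v) :
    supp v ⊆ supp c := by
  set u : Fin n → ZMod 2 := fun i => v i * c i with hu
  set e : Fin n → ZMod 2 := fun i => v i * (1 + c i) with he
  have key : ∀ a b : ZMod 2, a * b + a * (1 + b) = a := by decide
  have hdecomp : u + e = v := by
    funext i; exact key (v i) (c i)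
  have hdecomp2 : (u + c) + e = v + c := by
    rw [add_right_comm, hdecomp]
  have hdisj1 : ∀ i, (u + c) i = 0 ∨ e i = 0 := by
    intro i
    have : ∀ a b : ZMod 2, a * b + b = 0 ∨ a * (1 + b) = 0 := by decide
    exact this (v i) (c i)
  have hdisj2 : ∀ i, u i = 0 ∨ e i = 0 := by
    intro i
    have : ∀ a b : ZMod 2, a * b = 0 ∨ a * (1 + b) = 0 := by decide
    exact this (v i) (c i)
  have hw1 : wt (v + c) = wt (u + c) + wt e := by rw [← hdecomp2, wt_add_of_disj hdisj1]
  have hw2 : wt v = wt u + wt e := by rw [← hdecomp, wt_add_of_disj hdisj2]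
  have hn1 : nval (v + c) = nval (u + c) + nval e := by
    rw [← hdecomp2, nval_add_of_disj hdisj1]
  have hn2 : nval v = nval u + nval e := by rw [← hdecomp, nval_add_of_disj hdisj2]
  have hne' : u + c ≠ u := fun hcon => hc (by rwa [add_eq_left] at hcon)
  have hplt : plt (u + c) u := by
    refine ⟨?_, hne'⟩
    rcases h.1.1 with h1 | ⟨h1, h2⟩
    · left; omega
    · right; omega
  have hcov : covers u v := by
    intro i hi
    rw [mem_supp] at hi ⊢
    intro hvi
    apply hi
    show v i * c i = 0
    rw [hvi, zero_mul]
  have huv := h.2 u hplt hcov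
  intro i hi
  rw [mem_supp] at hi ⊢
  intro hci
  apply hi
  rw [← huv]
  show v i * c i = 0
  rw [hci, mul_zero]

lemma supp_add_of_subset {c v : Fin n → ZMod 2} (h : supp v ⊆ supp c) :
    supp (c + v) = supp c \ supp v := by
  ext i
  have key : ∀ a b : ZMod 2, (b ≠ 0 → a ≠ 0) → (a + b ≠ 0 ↔ (a ≠ 0 ∧ b = 0)) := by decide
  simp only [mem_supp, Finset.mem_sdiff, Pi.add_apply]
  have hi : v i ≠ 0 → c i ≠ 0 := fun hv => mem_supp.mp (h (mem_supp.mpr hv))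
  rw [key _ _ hi]
  tauto

lemma wt_add_of_subset {c v : Fin n → ZMod 2} (h : supp v ⊆ supp c) :
    wt (c + v) + wt v = wt c := by
  rw [wt, wt, wt, supp_add_of_subset h]
  exact Finset.card_sdiff_add_card_eq_card h

/-- Main structural lemma about larger halves. -/
lemma lh_main {c u : Fin n → ZMod 2} (hc : c ≠ 0) (hu : IsLH c u)
    (m : Fin n) (hm : m ∈ supp c) (hmin : ∀ i ∈ supp c, m ≤ i) :
    supp u ⊆ supp c ∧ wt c ≤ 2 * wt u ∧ (2 * wt u = wt c → m ∈ supp u) := by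
  have hsub : supp u ⊆ supp c := lh_subset hc hu
  have hwt : wt (c + u) + wt u = wt c := wt_add_of_subset hsub
  have hple : ple (u + c) u := hu.1.1
  have hcomm : u + c = c + u := add_comm u c
  have hle : wt (c + u) ≤ wt u := by
    rcases hple with h1 | ⟨h1, _⟩ <;> rw [hcomm] at h1 <;> omega
  refine ⟨hsub, by omega, ?_⟩
  intro heq
  have hwteq : wt (c + u) = wt u := by omega
  have hnval : nval (c + u) ≤ nval u := by
    rcases hple with h1 | ⟨_, h2⟩
    · rw [hcomm] at h1; omega
    · rwa [hcomm] at h2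
  by_contra hmem
  have hma : (c + u) m ≠ 0 := by
    have hcm : c m ≠ 0 := mem_supp.mp hm
    have hum : u m = 0 := by
      by_contra h0; exact hmem (mem_supp.mpr h0)
    show c m + u m ≠ 0
    rwa [hum, add_zero]
  have : nval u < nval (c + u) := by
    apply nval_lt m hma
    intro i hi
    have hle' := hmin i (hsub (mem_supp.mpr hi))
    have hne : i ≠ m := fun hcon => hmem (mem_supp.mpr (hcon ▸ hi))
    exact lt_of_le_of_ne hle' (fun hcon => hne (hcon.symm))
  omega

lemma add_ne_zero_of_ne {c c' : Fin n → ZMod 2} (h : c ≠ c') : c + c' ≠ 0 := by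
  intro hcon
  apply h
  funext i
  have : c i + c' i = 0 := congrFun hcon i
  revert this
  have : ∀ a b : ZMod 2, a + b = 0 → a = b := by decide
  exact this _ _

lemma eq_of_supp_eq {x y : Fin n → ZMod 2} (h : supp x = supp y) : x = y := by
  funext i
  have hx : x i ≠ 0 ↔ y i ≠ 0 := by
    rw [← mem_supp, ← mem_supp, h]
  have : ∀ a b : ZMod 2, (a ≠ 0 ↔ b ≠ 0) → a = b := by decide
  exact this _ _ hx

lemma supp_vand (x y : Fin n → ZMod 2) : supp (vand x y) = supp x ∩ supp y := by
  ext i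
  simp only [mem_supp, Finset.mem_inter, vand, mul_ne_zero_iff]

end Helpers

/-- if distinct weight-d codewords c, c' (d even) have a common
larger half v ∈ LH⁻(c) ∩ LH⁻(c'), then v = c ∩ c' and l(c) = l(c'); moreover
c + c' has weight d, l(c + c') ≠ l(c), and c + c' has no common larger half
with c. -/
theorem stmt14 {n : ℕ} (C : Submodule (ZMod 2) (Fin n → ZMod 2)) (d : ℕ)
    (hd : HasMinDist C d) (heven : Even d)
    (c c' : Fin n → ZMod 2) (hc : c ∈ C) (hc' : c' ∈ C)
    (hw : wt c = d) (hw' : wt c' = d) (hne : c ≠ c')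
    (v : Fin n → ZMod 2) (hv : v ∈ LHm c ∩ LHm c') :
    v = vand c c' ∧ lm c = lm c' ∧
    wt (c + c') = d ∧ lm (c + c') ≠ lm c ∧ LH (c + c') ∩ LH c = ∅ := by
  obtain ⟨⟨hvc, hv2⟩, hvc', hv2'⟩ := hv
  -- basic positivity
  have hd0 : 0 < d := by
    obtain ⟨c0, _, hc0ne, hc0w⟩ := hd.1
    rcases Nat.eq_zero_or_pos d with h | h
    · exact absurd (wt_eq_zero_iff.mp (by omega)) hc0ne
    · exact h
  have hcne : c ≠ 0 := fun h => by
    rw [h] at hw; rw [wt_eq_zero_iff.mpr rfl] at hw; omega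
  have hcne' : c' ≠ 0 := fun h => by
    rw [h] at hw'; rw [wt_eq_zero_iff.mpr rfl] at hw'; omega
  have hnc : (supp c).Nonempty := Finset.card_pos.mp (by show 0 < wt c; omega)
  have hnc' : (supp c').Nonempty := Finset.card_pos.mp (by show 0 < wt c'; omega)
  set m := (supp c).min' hnc with hm_def
  set m' := (supp c').min' hnc' with hm'_def
  have hm : m ∈ supp c := Finset.min'_mem _ _
  have hm' : m' ∈ supp c' := Finset.min'_mem _ _
  have hmin : ∀ i ∈ supp c, m ≤ i := fun i hi => Finset.min'_le _ _ hi
  have hmin' : ∀ i ∈ supp c', m' ≤ i := fun i hi => Finset.min'_le _ _ hi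
  obtain ⟨hsubv, -, hmemv⟩ := lh_main hcne hvc m hm hmin
  obtain ⟨hsubv', -, hmemv'⟩ := lh_main hcne' hvc' m' hm' hmin'
  have hmv : m ∈ supp v := hmemv hv2
  have hmv' : m' ∈ supp v := hmemv' hv2'
  -- intersection cardinality
  have hsubcap : supp v ⊆ supp c ∩ supp c' :=
    Finset.subset_inter hsubv hsubv'
  have hccC : c + c' ∈ C := add_mem hc hc'
  have hccne : c + c' ≠ 0 := add_ne_zero_of_ne hne
  have hmd : d ≤ wt (c + c') := hd.2 _ hccC hccne
  have hsuppcc : supp (c + c') = (supp c ∪ supp c') \ (supp c ∩ supp c') := by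
    ext i
    have key : ∀ a b : ZMod 2,
        (a + b ≠ 0 ↔ ((a ≠ 0 ∨ b ≠ 0) ∧ ¬(a ≠ 0 ∧ b ≠ 0))) := by decide
    simp only [mem_supp, Finset.mem_sdiff, Finset.mem_union, Finset.mem_inter,
      Pi.add_apply]
    exact key _ _
  have ec : (supp c).card = wt c := rfl
  have ec' : (supp c').card = wt c' := rfl
  have ev : (supp v).card = wt v := rfl
  have hcard : wt (c + c') + 2 * (supp c ∩ supp c').card = wt c + wt c' := by
    have h1 : ((supp c ∪ supp c') \ (supp c ∩ supp c')).card
        + (supp c ∩ supp c').card = (supp c ∪ supp c').card :=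
      Finset.card_sdiff_add_card_eq_card
        (Finset.inter_subset_union)
    have h2 : (supp c ∪ supp c').card + (supp c ∩ supp c').card
        = (supp c).card + (supp c').card := Finset.card_union_add_card_inter _ _
    have h3 : wt (c + c') = ((supp c ∪ supp c') \ (supp c ∩ supp c')).card := by
      rw [wt, hsuppcc]
    omega
  have hkv : wt v ≤ (supp c ∩ supp c').card := Finset.card_le_card hsubcap
  have hk : (supp c ∩ supp c').card = wt v := by omega
  have hwtcc : wt (c + c') = d := by omega
  have hsv : supp v = supp c ∩ supp c' :=
    Finset.eq_of_subset_of_card_le hsubcap (by omega)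
  have part1 : v = vand c c' := eq_of_supp_eq (by rw [hsv, supp_vand])
  -- l(c) = l(c')
  have hmm' : m = m' := by
    have h1 : m' ≤ m := hmin' m (Finset.mem_inter.mp (hsv ▸ hmv)).2
    have h2 : m ≤ m' := hmin m' (Finset.mem_inter.mp (hsv ▸ hmv')).1
    exact le_antisymm h2 h1
  have hlmc : lm c = (m : WithTop (Fin n)) := (Finset.coe_min' hnc).symm
  have hlmc' : lm c' = (m' : WithTop (Fin n)) := (Finset.coe_min' hnc').symm
  have part2 : lm c = lm c' := by rw [hlmc, hlmc', hmm']
  -- m not in supp (c+c')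
  have hmnotcc : m ∉ supp (c + c') := by
    rw [hsuppcc]
    intro hcon
    exact (Finset.mem_sdiff.mp hcon).2 (hsv ▸ hmv)
  have hncc : (supp (c + c')).Nonempty :=
    Finset.card_pos.mp (by show 0 < wt (c + c'); omega)
  set m'' := (supp (c + c')).min' hncc with hm''_def
  have hm'' : m'' ∈ supp (c + c') := Finset.min'_mem _ _
  have hmin'' : ∀ i ∈ supp (c + c'), m'' ≤ i := fun i hi => Finset.min'_le _ _ hi
  have part4 : lm (c + c') ≠ lm c := by
    rw [hlmc]
    have : lm (c + c') = (m'' : WithTop (Fin n)) := (Finset.coe_min' hncc).symm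
    rw [this]
    intro hcon
    have : m'' = m := WithTop.coe_injective hcon
    exact hmnotcc (this ▸ hm'')
  -- no common larger half
  have part5 : LH (c + c') ∩ LH c = ∅ := by
    rw [Set.eq_empty_iff_forall_notMem]
    rintro u ⟨hu1, hu2⟩
    obtain ⟨hsubA, hgeA, -⟩ := lh_main hccne hu1 m'' hm'' hmin''
    obtain ⟨hsubB, hgeB, hmemB⟩ := lh_main hcne hu2 m hm hmin
    have hsubd : supp u ⊆ supp c \ supp c' := by
      intro i hi
      have h1 : i ∈ supp c := hsubB hi
      have h2 : i ∈ supp (c + c') := hsubA hi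
      rw [Finset.mem_sdiff]
      refine ⟨h1, fun h3 => ?_⟩
      rw [hsuppcc, Finset.mem_sdiff] at h2
      exact h2.2 (Finset.mem_inter.mpr ⟨h1, h3⟩)
    have hcsd : (supp c \ supp c').card + (supp c ∩ supp c').card
        = (supp c).card := Finset.card_sdiff_add_card_inter _ _
    have hwu : wt u ≤ (supp c \ supp c').card := Finset.card_le_card hsubd
    have hwueq : 2 * wt u = wt c := by
      have h1 : wt c ≤ 2 * wt u := hgeB
      have h2 : (supp c).card = wt c := rfl
      omega
    have hmu : m ∈ supp u := hmemB hwueq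
    exact (Finset.mem_sdiff.mp (hsubd hmu)).2 (Finset.mem_inter.mp (hsv ▸ hmv)).2
  exact ⟨part1, part2, hwtcc, part4, part5⟩
end

section
/- (Theorem 4) Let C be a binary linear code of length n with minimum distance d, with coset leaders chosen as ⪯-minimum elements, and let T be a trial set for C. For an integer i with ⌈d/2⌉ ≤ i ≤ ⌊n/2⌋ define B_i = |A_{2i−2}(T)| + |A_{2i−1}(T)| + |A_{2i}(T)|. If C(2i−3, i) > 3·C(2i − ⌈d/2⌉, i)·B_i, then (C(2i−3, i) − 3·C(2i − ⌈d/2⌉, i)·B_i)·B_i ≤ |LH_i(T)| ≤ C(2i−3, i)·|A_{2i−2}(T)| + 2·C(2i−1, i)·(|A_{2i−1}(T)| + |A_{2i}(T)|), where C(m,r) denotes the binomial coefficient. -/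
namespace Stmt17Aux
variable {n : ℕ}


variable {n : ℕ}

lemma zmod2_cases (a : ZMod 2) : a = 0 ∨ a = 1 := by fin_cases a <;> simp <;> [exact Or.inl rfl; exact Or.inr rfl]

lemma mem_supp {x : Fin n → ZMod 2} {j : Fin n} : j ∈ supp x ↔ x j ≠ 0 := by
  simp [supp]

lemma eq_of_supp_eq {x y : Fin n → ZMod 2} (h : supp x = supp y) : x = y := by
  funext j
  have hx := zmod2_cases (x j); have hy := zmod2_cases (y j)
  have hm : (j ∈ supp x) = (j ∈ supp y) := by rw [h]
  simp only [mem_supp] at hm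
  rcases hx with hx | hx <;> rcases hy with hy | hy <;> rw [hx, hy] <;> simp [hx, hy] at hm

def chi (S : Finset (Fin n)) : Fin n → ZMod 2 := fun j => if j ∈ S then 1 else 0

lemma supp_chi (S : Finset (Fin n)) : supp (chi S) = S := by
  ext j; by_cases h : j ∈ S <;> simp [mem_supp, chi, h]

lemma chi_supp (x : Fin n → ZMod 2) : chi (supp x) = x :=
  eq_of_supp_eq (supp_chi _)

lemma chi_injective : Function.Injective (chi (n := n)) := by
  intro A B h; rw [← supp_chi A, ← supp_chi B, h]

lemma supp_add (x y : Fin n → ZMod 2) : supp (x + y) = symmDiff (supp x) (supp y) := by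
  ext j
  simp only [mem_supp, Finset.mem_symmDiff, mem_supp, Pi.add_apply]
  rcases zmod2_cases (x j) with hx | hx <;> rcases zmod2_cases (y j) with hy | hy <;>
    simp [hx, hy] <;> decide

lemma supp_eq_zero_iff {x : Fin n → ZMod 2} : supp x = ∅ ↔ x = 0 := by
  constructor
  · intro h; have := eq_of_supp_eq (x := x) (y := 0) (by rw [h]; simp [supp])
    simpa using this
  · intro h; subst h; simp [supp]

lemma supp_nonempty {x : Fin n → ZMod 2} (h : x ≠ 0) : (supp x).Nonempty := by
  rw [Finset.nonempty_iff_ne_empty]; intro he; exact h (supp_eq_zero_iff.mp he)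

lemma nval_eq_sum (x : Fin n → ZMod 2) :
    nval x = ∑ j ∈ supp x, 2 ^ (n - 1 - (j : ℕ)) := by
  rw [nval, supp, Finset.sum_filter]
  apply Finset.sum_congr rfl
  intro j _
  rcases zmod2_cases (x j) with hx | hx <;> simp [hx] <;> rfl

/-- sum of 2-powers over a set with all indices > m is < 2^(n-1-m) -/
lemma sum_pow_lt (A : Finset (Fin n)) (m : Fin n) (h : ∀ j ∈ A, m < j) :
    ∑ j ∈ A, 2 ^ (n - 1 - (j : ℕ)) < 2 ^ (n - 1 - (m : ℕ)) := by
  classical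
  have hinj : Set.InjOn (fun j : Fin n => n - 1 - (j : ℕ)) A := by
    intro a ha b hb hab
    have ha' : (a : ℕ) < n := a.isLt
    have hb' : (b : ℕ) < n := b.isLt
    have hab' : n - 1 - (a:ℕ) = n - 1 - (b:ℕ) := hab
    have : (a : ℕ) = (b : ℕ) := by omega
    exact Fin.ext this
  have himg : ∀ j ∈ A, (n - 1 - (j : ℕ)) ∈ Finset.range (n - 1 - (m : ℕ)) := by
    intro j hj
    have := h j hj
    have hj' : (j : ℕ) < n := j.isLt
    have hm' : (m : ℕ) < (j : ℕ) := this
    simp only [Finset.mem_range]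
    omega
  calc ∑ j ∈ A, 2 ^ (n - 1 - (j : ℕ))
      = ∑ k ∈ A.image (fun j : Fin n => n - 1 - (j : ℕ)), 2 ^ k := by
        rw [Finset.sum_image]
        intro a ha b hb hab
        exact hinj (Finset.mem_coe.mpr ha) (Finset.mem_coe.mpr hb) hab
    _ ≤ ∑ k ∈ Finset.range (n - 1 - (m : ℕ)), 2 ^ k := by
        apply Finset.sum_le_sum_of_subset
        intro k hk
        simp only [Finset.mem_image] at hk
        obtain ⟨j, hj, rfl⟩ := hk
        exact himg j hj
    _ = 2 ^ (n - 1 - (m : ℕ)) - 1 := by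
        induction (n - 1 - (m : ℕ)) with
        | zero => simp
        | succ k ih => rw [Finset.sum_range_succ, ih]; have := Nat.one_le_two_pow (n := k); ring_nf; omega
    _ < 2 ^ (n - 1 - (m : ℕ)) := by have := Nat.one_le_two_pow (n := n - 1 - (m : ℕ)); omega

/-- For disjoint W V with union S (nonempty), sum over W ≤ sum over V iff min' S ∈ V. -/
lemma sum_le_sum_iff_min (W V : Finset (Fin n)) (hdisj : Disjoint W V)
    (hS : (W ∪ V).Nonempty) :
    (∑ j ∈ W, 2 ^ (n - 1 - (j : ℕ)) ≤ ∑ j ∈ V, 2 ^ (n - 1 - (j : ℕ)))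
      ↔ (W ∪ V).min' hS ∈ V := by
  set m := (W ∪ V).min' hS with hm
  have hmem : m ∈ W ∪ V := Finset.min'_mem _ hS
  have hle : ∀ j ∈ W ∪ V, m ≤ j := fun j hj => Finset.min'_le _ j hj
  constructor
  · intro hsum
    by_contra hmV
    have hmW : m ∈ W := by rcases Finset.mem_union.mp hmem with h | h; exact h; exact absurd h hmV
    have hVlt : ∀ j ∈ V, m < j := by
      intro j hj
      have := hle j (Finset.mem_union_right _ hj)
      rcases lt_or_eq_of_le this with h | h
      · exact h
      · exact absurd (h ▸ hj) (by rw [h] at hmV ⊢; exact hmV)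
    have h1 : ∑ j ∈ V, 2 ^ (n - 1 - (j : ℕ)) < 2 ^ (n - 1 - (m : ℕ)) := sum_pow_lt V m hVlt
    have h2 : 2 ^ (n - 1 - (m : ℕ)) ≤ ∑ j ∈ W, 2 ^ (n - 1 - (j : ℕ)) :=
      Finset.single_le_sum (f := fun j : Fin n => 2 ^ (n - 1 - (j : ℕ))) (fun _ _ => Nat.zero_le _) hmW
    omega
  · intro hmV
    have hWlt : ∀ j ∈ W, m < j := by
      intro j hj
      have := hle j (Finset.mem_union_left _ hj)
      rcases lt_or_eq_of_le this with h | h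
      · exact h
      · exfalso; exact (Finset.disjoint_left.mp hdisj (h ▸ hj)) hmV
    have h1 : ∑ j ∈ W, 2 ^ (n - 1 - (j : ℕ)) < 2 ^ (n - 1 - (m : ℕ)) := sum_pow_lt W m hWlt
    have h2 : 2 ^ (n - 1 - (m : ℕ)) ≤ ∑ j ∈ V, 2 ^ (n - 1 - (j : ℕ)) :=
      Finset.single_le_sum (f := fun j : Fin n => 2 ^ (n - 1 - (j : ℕ))) (fun _ _ => Nat.zero_le _) hmV
    omega


-- NEW CHUNK
lemma min'_congr {s t : Finset (Fin n)} (h : s = t) (hs : s.Nonempty) :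
    s.min' hs = t.min' (h ▸ hs) := by subst h; rfl

lemma add_ne_self {c v : Fin n → ZMod 2} (hc : c ≠ 0) : v + c ≠ v := by
  intro h
  apply hc
  have h2 : v + c = v + 0 := by rw [add_zero]; exact h
  exact add_left_cancel h2

lemma plt_char {c v : Fin n → ZMod 2} (hc : c ≠ 0) (hsub : supp v ⊆ supp c) :
    plt (v + c) v ↔ (wt c < 2 * wt v ∨
      (wt c = 2 * wt v ∧ (supp c).min' (supp_nonempty hc) ∈ supp v)) := by
  have hW : supp (v + c) = supp c \ supp v := by
    rw [supp_add]
    ext j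
    simp only [Finset.mem_symmDiff, Finset.mem_sdiff]
    constructor
    · rintro (⟨h1, h2⟩ | ⟨h1, h2⟩)
      · exact absurd (hsub h1) h2
      · exact ⟨h1, h2⟩
    · rintro ⟨h1, h2⟩; exact Or.inr ⟨h1, h2⟩
  have hwv : wt v ≤ wt c := Finset.card_le_card hsub
  have hwW : wt (v + c) = wt c - wt v := by
    rw [wt, hW, Finset.card_sdiff_of_subset hsub]; rfl
  have hne : v + c ≠ v := add_ne_self hc
  have hunion : supp (v + c) ∪ supp v = supp c := by
    rw [hW]; exact Finset.sdiff_union_of_subset hsub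
  have hdisj : Disjoint (supp (v + c)) (supp v) := by
    rw [hW]; exact Finset.sdiff_disjoint
  have hSne : (supp (v + c) ∪ supp v).Nonempty := by
    rw [hunion]; exact supp_nonempty hc
  have hmin : (supp (v + c) ∪ supp v).min' hSne = (supp c).min' (supp_nonempty hc) :=
    min'_congr hunion hSne
  have hsumiff := sum_le_sum_iff_min (supp (v + c)) (supp v) hdisj hSne
  rw [hmin] at hsumiff
  rw [← nval_eq_sum, ← nval_eq_sum] at hsumiff
  constructor
  · rintro ⟨h | ⟨heq, hnv⟩, -⟩
    · left; omega
    · right; exact ⟨by omega, hsumiff.mp hnv⟩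
  · rintro (h | ⟨heq, hm⟩)
    · exact ⟨Or.inl (by omega), hne⟩
    · exact ⟨Or.inr ⟨by omega, hsumiff.mpr hm⟩, hne⟩

lemma supp_vand (x y : Fin n → ZMod 2) : supp (vand x y) = supp x ∩ supp y := by
  ext j
  simp only [mem_supp, vand, Finset.mem_inter, mem_supp]
  exact mul_ne_zero_iff

lemma lh_subset_supp {c v : Fin n → ZMod 2} (hc : c ≠ 0) (hv : IsLH c v) :
    supp v ⊆ supp c := by
  classical
  set v' := vand v c with hv'
  have hsv' : supp v' = supp v ∩ supp c := supp_vand v c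
  set K : Finset (Fin n) := supp v \ supp c with hK
  -- supports
  have hsvc : supp (v + c) = K ∪ (supp c \ supp v) := by
    rw [supp_add]
    ext j
    simp only [Finset.mem_symmDiff, Finset.mem_union, Finset.mem_sdiff, hK] <;> tauto
  have hsv'c : supp (v' + c) = supp c \ supp v := by
    rw [supp_add, hsv']
    ext j
    simp only [Finset.mem_symmDiff, Finset.mem_inter, Finset.mem_sdiff]
    tauto
  have hdisj1 : Disjoint K (supp c \ supp v) := by
    rw [hK, Finset.disjoint_left]
    intro a ha hb
    simp only [Finset.mem_sdiff] at ha hb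
    exact ha.2 hb.1
  have hdisj2 : Disjoint K (supp v ∩ supp c) := by
    rw [hK, Finset.disjoint_left]
    intro a ha hb
    simp only [Finset.mem_sdiff] at ha
    simp only [Finset.mem_inter] at hb
    exact ha.2 hb.2
  have hVdecomp : supp v = K ∪ (supp v ∩ supp c) := by
    rw [hK]; ext j
    simp only [Finset.mem_union, Finset.mem_sdiff, Finset.mem_inter]
    tauto
  -- weights
  have hw1 : wt (v + c) = K.card + wt (v' + c) := by
    rw [wt, wt, hsvc, hsv'c, Finset.card_union_of_disjoint hdisj1]
  have e0 : (supp v).card = (K ∪ (supp v ∩ supp c)).card := by rw [← hVdecomp]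
  have hw2 : wt v = K.card + wt v' := by
    rw [wt, wt, hsv', e0, Finset.card_union_of_disjoint hdisj2]
  -- nvals
  have hn1 : nval (v + c) = (∑ j ∈ K, 2 ^ (n - 1 - (j : ℕ))) + nval (v' + c) := by
    rw [nval_eq_sum, nval_eq_sum, hsvc, hsv'c, Finset.sum_union hdisj1]
  have hn2 : nval v = (∑ j ∈ K, 2 ^ (n - 1 - (j : ℕ))) + nval v' := by
    have e1 : (∑ j ∈ supp v, 2 ^ (n - 1 - (j : ℕ)))
        = ∑ j ∈ K ∪ (supp v ∩ supp c), 2 ^ (n - 1 - (j : ℕ)) := by rw [← hVdecomp]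
    rw [nval_eq_sum, nval_eq_sum, hsv', e1, Finset.sum_union hdisj2]
  -- plt transfer
  have hplt : plt (v' + c) v' := by
    obtain ⟨hple, -⟩ := hv.1
    refine ⟨?_, add_ne_self hc⟩
    rcases hple with h | ⟨h1, h2⟩
    · exact Or.inl (by omega)
    · exact Or.inr ⟨by omega, by omega⟩
  have := hv.2 v' hplt (by
    show supp v' ⊆ supp v
    rw [hsv']; exact Finset.inter_subset_left)
  rw [← this, hsv']
  exact Finset.inter_subset_right

lemma lh_char {c : Fin n → ZMod 2} (hc : c ≠ 0) (v : Fin n → ZMod 2) :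
    IsLH c v ↔ supp v ⊆ supp c ∧
      (2 * wt v = wt c + 1 ∨
       (2 * wt v = wt c ∧ (supp c).min' (supp_nonempty hc) ∈ supp v) ∨
       (2 * wt v = wt c + 2 ∧ (supp c).min' (supp_nonempty hc) ∉ supp v)) := by
  classical
  set m := (supp c).min' (supp_nonempty hc) with hm
  have hs1 : 1 ≤ wt c := Finset.card_pos.mpr (supp_nonempty hc)
  constructor
  · intro hv
    have hsub : supp v ⊆ supp c := lh_subset_supp hc hv
    refine ⟨hsub, ?_⟩
    have hlow := (plt_char hc hsub).mp hv.1
    -- upper bounds from minimality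
    -- claim: not (2 * wt v ≥ wt c + 3)
    have hub1 : ¬ (wt c + 3 ≤ 2 * wt v) := by
      intro hbig
      have hVne : (supp v).Nonempty := by
        rw [Finset.nonempty_iff_ne_empty]
        intro h
        have : wt v = 0 := by rw [wt, h]; rfl
        omega
      obtain ⟨x, hx⟩ := hVne
      have hsu : supp (chi ((supp v).erase x)) = (supp v).erase x := supp_chi _
      have hwu : wt (chi ((supp v).erase x)) = wt v - 1 := by
        unfold wt; rw [hsu, Finset.card_erase_of_mem hx]
      have hwv1 : 1 ≤ wt v := Finset.card_pos.mpr ⟨x, hx⟩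
      have hplt : plt (chi ((supp v).erase x) + c) (chi ((supp v).erase x)) := by
        rw [plt_char hc (by rw [hsu]; exact (Finset.erase_subset _ _).trans hsub)]
        left; omega
      have heq := hv.2 _ hplt
        (by show supp _ ⊆ supp v; rw [hsu]; exact Finset.erase_subset _ _)
      have hse : (supp v).erase x = supp v := by rw [← hsu, heq]
      exact (hse ▸ (Finset.notMem_erase x (supp v))) hx
    have hub2 : ¬ (2 * wt v = wt c + 2 ∧ m ∈ supp v) := by
      rintro ⟨hbig, hmV⟩
      have hwv2 : 2 ≤ wt v := by omega
      have hcard1 : 0 < ((supp v).erase m).card := by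
        rw [Finset.card_erase_of_mem hmV]
        unfold wt at hwv2; omega
      obtain ⟨x, hx⟩ := Finset.card_pos.mp hcard1
      have hxv : x ∈ supp v := Finset.mem_of_mem_erase hx
      have hxm : x ≠ m := Finset.ne_of_mem_erase hx
      have hsu : supp (chi ((supp v).erase x)) = (supp v).erase x := supp_chi _
      have hwu : wt (chi ((supp v).erase x)) = wt v - 1 := by
        unfold wt; rw [hsu, Finset.card_erase_of_mem hxv]
      have hplt : plt (chi ((supp v).erase x) + c) (chi ((supp v).erase x)) := by
        rw [plt_char hc (by rw [hsu]; exact (Finset.erase_subset _ _).trans hsub)]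
        right
        refine ⟨by omega, ?_⟩
        rw [hsu]; exact Finset.mem_erase.mpr ⟨fun h => hxm h.symm, hmV⟩
      have heq := hv.2 _ hplt
        (by show supp _ ⊆ supp v; rw [hsu]; exact Finset.erase_subset _ _)
      have hse : (supp v).erase x = supp v := by rw [← hsu, heq]
      exact (hse ▸ (Finset.notMem_erase x (supp v))) hxv
    rcases hlow with h | ⟨h1, h2⟩
    · -- wt c < 2 wt v, so 2 wt v ∈ {wt c + 1, wt c + 2}
      rcases (by omega : 2 * wt v = wt c + 1 ∨ 2 * wt v = wt c + 2) with h' | h'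
      · exact Or.inl h'
      · right; right
        refine ⟨h', fun hmV => hub2 ⟨h', hmV⟩⟩
    · exact Or.inr (Or.inl ⟨h1.symm, h2⟩)
  · rintro ⟨hsub, hcond⟩
    constructor
    · rw [plt_char hc hsub]
      rcases hcond with h | ⟨h1, h2⟩ | ⟨h1, h2⟩
      · left; omega
      · right; exact ⟨by omega, h2⟩
      · left; omega
    · intro u hplt hcov
      have husub : supp u ⊆ supp c := (hcov : supp u ⊆ supp v).trans hsub
      have hulow := (plt_char hc husub).mp hplt
      have huv : wt u ≤ wt v := Finset.card_le_card hcov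
      have : wt u = wt v := by
        rcases hcond with h | ⟨h1, h2⟩ | ⟨h1, h2⟩
        · omega
        · omega
        · rcases hulow with h' | ⟨h1', h2'⟩
          · omega
          · exact absurd (hcov h2') h2
      apply eq_of_supp_eq
      exact Finset.eq_of_subset_of_card_le hcov (le_of_eq this.symm)
-- ===== counting layer =====

def hasMinOf (S A : Finset (Fin n)) : Prop := ∃ m ∈ A, ∀ j ∈ S, m ≤ j

instance (S A : Finset (Fin n)) : Decidable (hasMinOf S A) := by
  unfold hasMinOf; infer_instance

lemma hasMinOf_iff {S A : Finset (Fin n)} (hA : A ⊆ S) (hS : S.Nonempty) :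
    hasMinOf S A ↔ S.min' hS ∈ A := by
  constructor
  · rintro ⟨m, hmA, hmle⟩
    have h1 : S.min' hS ≤ m := S.min'_le m (hA hmA)
    have h2 : m ≤ S.min' hS := hmle _ (S.min'_mem hS)
    have : m = S.min' hS := le_antisymm h2 h1
    exact this ▸ hmA
  · intro h
    exact ⟨_, h, fun j hj => S.min'_le j hj⟩

def Fc (c : Fin n → ZMod 2) (i : ℕ) : Finset (Finset (Fin n)) :=
  ((supp c).powersetCard i).filter (fun A =>
    2 * i = wt c + 1 ∨ (2 * i = wt c ∧ hasMinOf (supp c) A) ∨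
    (2 * i = wt c + 2 ∧ ¬ hasMinOf (supp c) A))

lemma mem_Fc {c : Fin n → ZMod 2} (hc : c ≠ 0) {i : ℕ} {A : Finset (Fin n)} :
    A ∈ Fc c i ↔ A ⊆ supp c ∧ A.card = i ∧
      (2 * i = wt c + 1 ∨ (2 * i = wt c ∧ (supp c).min' (supp_nonempty hc) ∈ A) ∨
       (2 * i = wt c + 2 ∧ (supp c).min' (supp_nonempty hc) ∉ A)) := by
  simp only [Fc, Finset.mem_filter, Finset.mem_powersetCard]
  constructor
  · rintro ⟨⟨h1, h2⟩, h3⟩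
    rw [hasMinOf_iff h1 (supp_nonempty hc)] at h3
    exact ⟨h1, h2, h3⟩
  · rintro ⟨h1, h2, h3⟩
    rw [← hasMinOf_iff h1 (supp_nonempty hc)] at h3
    exact ⟨⟨h1, h2⟩, h3⟩

lemma wt_eq_card (c : Fin n → ZMod 2) : wt c = (supp c).card := rfl

lemma Fc_card_a {c : Fin n → ZMod 2} (hc : c ≠ 0) {i : ℕ} (hi : 3 ≤ i)
    (hwc : wt c + 2 = 2 * i) : (Fc c i).card = (2 * i - 3).choose i := by
  have hmm : (supp c).min' (supp_nonempty hc) ∈ supp c := Finset.min'_mem _ _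
  have he : Fc c i = ((supp c).erase ((supp c).min' (supp_nonempty hc))).powersetCard i := by
    ext A
    rw [mem_Fc hc, Finset.mem_powersetCard, Finset.subset_erase]
    constructor
    · rintro ⟨h1, h2, h3 | ⟨h3, -⟩ | ⟨-, h4⟩⟩
      · omega
      · omega
      · exact ⟨⟨h1, h4⟩, h2⟩
    · rintro ⟨⟨h1, h4⟩, h2⟩
      exact ⟨h1, h2, Or.inr (Or.inr ⟨by omega, h4⟩)⟩
  rw [he, Finset.card_powersetCard, Finset.card_erase_of_mem hmm]
  rw [wt_eq_card] at hwc
  congr 1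
  omega

lemma Fc_card_b {c : Fin n → ZMod 2} (hc : c ≠ 0) {i : ℕ} (hi : 1 ≤ i)
    (hwc : wt c + 1 = 2 * i) : (Fc c i).card = (2 * i - 1).choose i := by
  have he : Fc c i = (supp c).powersetCard i := by
    ext A
    rw [mem_Fc hc, Finset.mem_powersetCard]
    constructor
    · rintro ⟨h1, h2, -⟩; exact ⟨h1, h2⟩
    · rintro ⟨h1, h2⟩; exact ⟨h1, h2, Or.inl (by omega)⟩
  rw [he, Finset.card_powersetCard]
  rw [wt_eq_card] at hwc
  congr 1
  omega

lemma Fc_card_c {c : Fin n → ZMod 2} (hc : c ≠ 0) {i : ℕ} (hi : 1 ≤ i)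
    (hwc : wt c = 2 * i) : (Fc c i).card = (2 * i - 1).choose i := by
  classical
  set m := (supp c).min' (supp_nonempty hc) with hm
  have hmm : m ∈ supp c := Finset.min'_mem _ _
  have hcard : (Fc c i).card = (((supp c).erase m).powersetCard (i - 1)).card := by
    apply Finset.card_nbij' (fun A => A.erase m) (fun A => insert m A)
    · intro A hA
      simp only [Finset.mem_coe] at hA ⊢
      rw [mem_Fc hc] at hA
      obtain ⟨h1, h2, h3⟩ := hA
      have hmA : m ∈ A := by
        rcases h3 with h | ⟨-, h⟩ | ⟨h, -⟩
        · omega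
        · exact h
        · omega
      rw [Finset.mem_powersetCard]
      constructor
      · intro x hx
        rw [Finset.mem_erase] at hx ⊢
        exact ⟨hx.1, h1 hx.2⟩
      · rw [Finset.card_erase_of_mem hmA, h2]
    · intro A hA
      simp only [Finset.mem_coe] at hA ⊢
      rw [Finset.mem_powersetCard, Finset.subset_erase] at hA
      obtain ⟨⟨h1, h4⟩, h2⟩ := hA
      rw [mem_Fc hc]
      refine ⟨Finset.insert_subset hmm h1, ?_, Or.inr (Or.inl ⟨by omega, Finset.mem_insert_self _ _⟩)⟩
      rw [Finset.card_insert_of_notMem h4, h2]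
      omega
    · intro A hA
      simp only [Finset.mem_coe] at hA
      rw [mem_Fc hc] at hA
      have hmA : m ∈ A := by
        rcases hA.2.2 with h | ⟨-, h⟩ | ⟨h, -⟩
        · omega
        · exact h
        · omega
      exact Finset.insert_erase hmA
    · intro A hA
      simp only [Finset.mem_coe] at hA
      rw [Finset.mem_powersetCard, Finset.subset_erase] at hA
      exact Finset.erase_insert hA.1.2
  rw [hcard, Finset.card_powersetCard, Finset.card_erase_of_mem hmm]
  rw [wt_eq_card] at hwc
  rw [hwc]
  have h2 : 2 * i - 1 - i = i - 1 := by omega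
  rw [← h2, Nat.choose_symm (by omega)]

lemma Fc_empty {c : Fin n → ZMod 2} (hc : c ≠ 0) {i : ℕ}
    (hwc : ¬(wt c + 2 = 2 * i ∨ wt c + 1 = 2 * i ∨ wt c = 2 * i)) : Fc c i = ∅ := by
  rw [Finset.eq_empty_iff_forall_notMem]
  intro A hA
  rw [mem_Fc hc] at hA
  rcases hA.2.2 with h | ⟨h, -⟩ | ⟨h, -⟩ <;> omega

lemma card_biUnion_lower {α β : Type*} [DecidableEq α] [DecidableEq β] (t : Finset α)
    (f : α → Finset β) (L X : ℕ)
    (hL : ∀ c ∈ t, L ≤ (f c).card)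
    (hX : ∀ c ∈ t, ∀ c' ∈ t, c ≠ c' → ((f c) ∩ (f c')).card ≤ X) :
    L * t.card ≤ (t.biUnion f).card + X * t.card * t.card := by
  classical
  induction t using Finset.induction_on with
  | empty => simp
  | @insert a s ha ih =>
    have hL' : ∀ c ∈ s, L ≤ (f c).card := fun c hc => hL c (Finset.mem_insert_of_mem hc)
    have hX' : ∀ c ∈ s, ∀ c' ∈ s, c ≠ c' → ((f c) ∩ (f c')).card ≤ X :=
      fun c hc c' hc' h => hX c (Finset.mem_insert_of_mem hc) c' (Finset.mem_insert_of_mem hc') h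
    have ih' := ih hL' hX'
    have hbi : (insert a s).biUnion f = f a ∪ s.biUnion f := Finset.biUnion_insert
    have hcard : (f a ∪ s.biUnion f).card + (f a ∩ s.biUnion f).card
        = (f a).card + (s.biUnion f).card := Finset.card_union_add_card_inter _ _
    have hint : (f a ∩ s.biUnion f).card ≤ X * s.card := by
      have hsub : f a ∩ s.biUnion f ⊆ s.biUnion (fun c => f a ∩ f c) := by
        intro x hx
        rw [Finset.mem_inter, Finset.mem_biUnion] at hx
        obtain ⟨h1, c, hc, h2⟩ := hx
        rw [Finset.mem_biUnion]
        exact ⟨c, hc, Finset.mem_inter.mpr ⟨h1, h2⟩⟩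
      calc (f a ∩ s.biUnion f).card ≤ (s.biUnion (fun c => f a ∩ f c)).card :=
            Finset.card_le_card hsub
        _ ≤ ∑ c ∈ s, (f a ∩ f c).card := Finset.card_biUnion_le
        _ ≤ s.card • X := Finset.sum_le_card_nsmul _ _ _ (fun c hc =>
            hX a (Finset.mem_insert_self _ _) c (Finset.mem_insert_of_mem hc)
              (fun h => ha (h ▸ hc)))
        _ = X * s.card := by rw [smul_eq_mul, Nat.mul_comm]
    have hLa : L ≤ (f a).card := hL a (Finset.mem_insert_self _ _)
    rw [hbi, Finset.card_insert_of_notMem ha]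
    have e1 : L * (s.card + 1) = L * s.card + L := by ring
    have e2 : X * (s.card + 1) * (s.card + 1)
        = X * s.card * s.card + 2 * (X * s.card) + X := by ring
    omega

end Stmt17Aux

open Stmt17Aux Finset

/-- Theorem 4: bounds on |LH_i(T)|. -/
theorem stmt17 {n : ℕ} (C : Submodule (ZMod 2) (Fin n → ZMod 2)) (d : ℕ)
    (hd : HasMinDist C d) (T : Set (Fin n → ZMod 2)) (hT : IsTrialSet C T)
    (i : ℕ) (hi1 : (d + 1) / 2 ≤ i) (hi2 : i ≤ n / 2)
    (B : ℕ)
    (hB : B = (Aw T (2 * i - 2)).ncard + (Aw T (2 * i - 1)).ncard +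
      (Aw T (2 * i)).ncard)
    (hcond : Nat.choose (2 * i - 3) i >
      3 * Nat.choose (2 * i - (d + 1) / 2) i * B) :
    (Nat.choose (2 * i - 3) i - 3 * Nat.choose (2 * i - (d + 1) / 2) i * B) * B
      ≤ (Aw (LHset T) i).ncard ∧
    (Aw (LHset T) i).ncard ≤
      Nat.choose (2 * i - 3) i * (Aw T (2 * i - 2)).ncard +
      2 * Nat.choose (2 * i - 1) i *
        ((Aw T (2 * i - 1)).ncard + (Aw T (2 * i)).ncard) := by
  classical
  obtain ⟨hTsub, -⟩ := hT
  have hd1 : 1 ≤ d := by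
    obtain ⟨c, hcmem, hc0, hwc⟩ := hd.1
    rcases Nat.eq_zero_or_pos d with h | h
    · exfalso
      apply hc0
      rw [h] at hwc
      exact supp_eq_zero_iff.mp (Finset.card_eq_zero.mp hwc)
    · exact h
  have hi3 : 3 ≤ i := by
    by_contra h
    have h0 : 2 * i - 3 < i := by omega
    rw [Nat.choose_eq_zero_of_lt h0] at hcond
    omega
  have hcC : ∀ c ∈ T, c ∈ C ∧ c ≠ 0 := by
    intro c hc
    have := hTsub hc
    exact ⟨this.1, by simpa using this.2⟩
  have hTfin : T.Finite := Set.toFinite T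
  set Tfin := hTfin.toFinset with hTfin'
  have hmemTfin : ∀ c, c ∈ Tfin ↔ c ∈ T := fun c => Set.Finite.mem_toFinset hTfin
  set P1 : (Fin n → ZMod 2) → Prop := fun c => wt c = 2 * i - 2 with hP1
  set P2 : (Fin n → ZMod 2) → Prop := fun c => wt c = 2 * i - 1 with hP2
  set P3 : (Fin n → ZMod 2) → Prop := fun c => wt c = 2 * i with hP3
  set Tf := Tfin.filter (fun c => P1 c ∨ P2 c ∨ P3 c) with hTf
  have hAw : ∀ w, (Aw T w).ncard = (Tfin.filter (fun c => wt c = w)).card := by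
    intro w
    have he : Aw T w = ↑(Tfin.filter (fun c => wt c = w)) := by
      ext v
      constructor
      · rintro ⟨h1, h2⟩
        rw [Finset.mem_coe, Finset.mem_filter]
        exact ⟨(hmemTfin v).mpr h1, h2⟩
      · intro hmem
        rw [Finset.mem_coe, Finset.mem_filter] at hmem
        exact ⟨(hmemTfin v).mp hmem.1, hmem.2⟩
    rw [he, Set.ncard_coe_finset]
  -- decomposition of Tf
  have hTfdec : Tf = (Tfin.filter P1 ∪ Tfin.filter P2) ∪ Tfin.filter P3 := by
    rw [hTf, Finset.filter_or, Finset.filter_or, Finset.union_assoc]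
  have hdis12 : Disjoint (Tfin.filter P1) (Tfin.filter P2) := by
    rw [Finset.disjoint_left]
    intro c h1 h2
    rw [Finset.mem_filter] at h1 h2
    have := h1.2; have := h2.2
    simp only [hP1, hP2] at *
    omega
  have hdis3 : Disjoint (Tfin.filter P1 ∪ Tfin.filter P2) (Tfin.filter P3) := by
    rw [Finset.disjoint_left]
    intro c h1 h2
    rw [Finset.mem_union, Finset.mem_filter, Finset.mem_filter] at h1
    rw [Finset.mem_filter] at h2
    have := h2.2
    rcases h1 with h | h <;> [have := h.2; have := h.2] <;>
      simp only [hP1, hP2, hP3] at * <;> omega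
  have hBcard : B = Tf.card := by
    rw [hB, hAw, hAw, hAw, hTfdec, Finset.card_union_of_disjoint hdis3,
      Finset.card_union_of_disjoint hdis12]
  set L := (2 * i - 3).choose i with hL
  set X := (2 * i - (d + 1) / 2).choose i with hX
  set c2 := (2 * i - 1).choose i with hc2
  -- weights facts for members of Tf
  have hTfw : ∀ c ∈ Tf, c ∈ T ∧ c ≠ 0 ∧
      (wt c + 2 = 2 * i ∨ wt c + 1 = 2 * i ∨ wt c = 2 * i) := by
    intro c hc
    rw [hTf, Finset.mem_filter] at hc
    have hcT : c ∈ T := (hmemTfin c).mp hc.1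
    refine ⟨hcT, (hcC c hcT).2, ?_⟩
    rcases hc.2 with h | h | h <;> simp only [hP1, hP2, hP3] at h <;> omega
  -- KEY set identity
  have hkey : Aw (LHset T) i = chi '' ↑(Tf.biUnion (fun c => Fc c i)) := by
    ext v
    constructor
    · rintro ⟨hvU, hwv⟩
      obtain ⟨c, hcT, hv⟩ : ∃ c ∈ T, IsLH c v := by
        simpa [LHset, LH] using hvU
      have hc0 : c ≠ 0 := (hcC c hcT).2
      have hchar := (lh_char hc0 v).mp hv
      refine ⟨supp v, ?_, chi_supp v⟩
      rw [Finset.mem_coe, Finset.mem_biUnion]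
      refine ⟨c, ?_, ?_⟩
      · rw [hTf, Finset.mem_filter]
        refine ⟨(hmemTfin c).mpr hcT, ?_⟩
        simp only [hP1, hP2, hP3]
        rcases hchar.2 with h | ⟨h, -⟩ | ⟨h, -⟩ <;> omega
      · rw [mem_Fc hc0]
        refine ⟨hchar.1, ?_, ?_⟩
        · exact hwv
        · rw [← hwv]
          exact hchar.2
    · rintro ⟨A, hA, rfl⟩
      rw [Finset.mem_coe, Finset.mem_biUnion] at hA
      obtain ⟨c, hcTf, hAFc⟩ := hA
      obtain ⟨hcT, hc0, -⟩ := hTfw c hcTf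
      rw [mem_Fc hc0] at hAFc
      have hwv : wt (chi A) = i := by
        rw [wt_eq_card, supp_chi]; exact hAFc.2.1
      refine ⟨?_, hwv⟩
      have hlh : IsLH c (chi A) := by
        rw [lh_char hc0, supp_chi]
        refine ⟨hAFc.1, ?_⟩
        have : wt (chi A) = A.card := by rw [wt_eq_card, supp_chi]
        rw [this, hAFc.2.1]
        exact hAFc.2.2
      exact Set.mem_biUnion hcT (show chi A ∈ LH c from hlh)
  have hncard : (Aw (LHset T) i).ncard = (Tf.biUnion (fun c => Fc c i)).card := by
    rw [hkey, Set.ncard_image_of_injective _ chi_injective, Set.ncard_coe_finset]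
  -- lower bound per c
  have hLb : ∀ c ∈ Tf, L ≤ (Fc c i).card := by
    intro c hc
    obtain ⟨-, hc0, hw⟩ := hTfw c hc
    rcases hw with h | h | h
    · rw [Fc_card_a hc0 hi3 h]
    · rw [Fc_card_b hc0 (by omega) h]
      exact Nat.choose_le_choose i (by omega)
    · rw [Fc_card_c hc0 (by omega) h]
      exact Nat.choose_le_choose i (by omega)
  -- pairwise intersection bound
  have hXb : ∀ c ∈ Tf, ∀ c' ∈ Tf, c ≠ c' → ((Fc c i) ∩ (Fc c' i)).card ≤ X := by
    intro c hc c' hc' hne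
    obtain ⟨hcT, hc0, hwc⟩ := hTfw c hc
    obtain ⟨hc'T, hc'0, hwc'⟩ := hTfw c' hc'
    have hsum0 : c + c' ≠ 0 := by
      intro h
      apply hne
      have : c + c' + c' = c' := by rw [h, zero_add]
      have hself : c' + c' = (0 : Fin n → ZMod 2) := by
        funext j
        exact CharTwo.add_self_eq_zero _
      rw [add_assoc, hself, add_zero] at this
      exact this
    have hdd : d ≤ wt (c + c') :=
      hd.2 _ (C.add_mem (hcC c hcT).1 (hcC c' hc'T).1) hsum0
    have hdisj : Disjoint (supp c \ supp c') (supp c' \ supp c) := by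
      rw [Finset.disjoint_left]
      intro a ha hb
      rw [Finset.mem_sdiff] at ha hb
      exact ha.2 hb.1
    have hsymm : wt (c + c') = (supp c \ supp c').card + (supp c' \ supp c).card := by
      rw [wt_eq_card, supp_add, symmDiff_def]
      exact Finset.card_union_of_disjoint hdisj
    have h1 : (supp c \ supp c').card + (supp c ∩ supp c').card = (supp c).card :=
      Finset.card_sdiff_add_card_inter _ _
    have h2 : (supp c' \ supp c).card + (supp c' ∩ supp c).card = (supp c').card :=
      Finset.card_sdiff_add_card_inter _ _
    have hcomm : (supp c' ∩ supp c).card = (supp c ∩ supp c').card := by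
      rw [Finset.inter_comm]
    have hwcc : (supp c).card ≤ 2 * i := by
      rw [← wt_eq_card]; omega
    have hwcc' : (supp c').card ≤ 2 * i := by
      rw [← wt_eq_card]; omega
    have hint : (supp c ∩ supp c').card ≤ 2 * i - (d + 1) / 2 := by omega
    have hsub : Fc c i ∩ Fc c' i ⊆ (supp c ∩ supp c').powersetCard i := by
      intro A hA
      rw [Finset.mem_inter, mem_Fc hc0, mem_Fc hc'0] at hA
      rw [Finset.mem_powersetCard]
      exact ⟨Finset.subset_inter hA.1.1 hA.2.1, hA.1.2.1⟩
    calc ((Fc c i) ∩ (Fc c' i)).card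
        ≤ ((supp c ∩ supp c').powersetCard i).card := Finset.card_le_card hsub
      _ = ((supp c ∩ supp c').card).choose i := Finset.card_powersetCard _ _
      _ ≤ X := Nat.choose_le_choose i hint
  have hmain := card_biUnion_lower Tf (fun c => Fc c i) L X hLb hXb
  rw [← hBcard] at hmain
  constructor
  · rw [hncard]
    have e1 : (L - 3 * X * B) * B = L * B - 3 * X * B * B := Nat.sub_mul _ _ _
    have e2 : 3 * X * B * B = 3 * (X * B * B) := by ring
    omega
  · rw [hncard, hAw, hAw, hAw]
    have hsum1 : ∑ c ∈ Tfin.filter P1, (Fc c i).card = (Tfin.filter P1).card * L := by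
      rw [Finset.sum_congr rfl (fun c hc => ?_), Finset.sum_const, smul_eq_mul]
      have hcTf : c ∈ Tf := by
        rw [hTf, Finset.mem_filter]
        rw [Finset.mem_filter] at hc
        exact ⟨hc.1, Or.inl hc.2⟩
      obtain ⟨-, hc0, -⟩ := hTfw c hcTf
      rw [Finset.mem_filter] at hc
      have := hc.2
      simp only [hP1] at this
      exact Fc_card_a hc0 hi3 (by omega)
    have hsum2 : ∑ c ∈ Tfin.filter P2, (Fc c i).card = (Tfin.filter P2).card * c2 := by
      rw [Finset.sum_congr rfl (fun c hc => ?_), Finset.sum_const, smul_eq_mul]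
      have hcTf : c ∈ Tf := by
        rw [hTf, Finset.mem_filter]
        rw [Finset.mem_filter] at hc
        exact ⟨hc.1, Or.inr (Or.inl hc.2)⟩
      obtain ⟨-, hc0, -⟩ := hTfw c hcTf
      rw [Finset.mem_filter] at hc
      have := hc.2
      simp only [hP2] at this
      exact Fc_card_b hc0 (by omega) (by omega)
    have hsum3 : ∑ c ∈ Tfin.filter P3, (Fc c i).card = (Tfin.filter P3).card * c2 := by
      rw [Finset.sum_congr rfl (fun c hc => ?_), Finset.sum_const, smul_eq_mul]
      have hcTf : c ∈ Tf := by
        rw [hTf, Finset.mem_filter]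
        rw [Finset.mem_filter] at hc
        exact ⟨hc.1, Or.inr (Or.inr hc.2)⟩
      obtain ⟨-, hc0, -⟩ := hTfw c hcTf
      rw [Finset.mem_filter] at hc
      have := hc.2
      simp only [hP3] at this
      exact Fc_card_c hc0 (by omega) (by omega)
    have hle : (Tf.biUnion (fun c => Fc c i)).card
        ≤ (Tfin.filter P1).card * L + (Tfin.filter P2).card * c2
          + (Tfin.filter P3).card * c2 := by
      calc (Tf.biUnion (fun c => Fc c i)).card
          ≤ ∑ c ∈ Tf, (Fc c i).card := Finset.card_biUnion_le
        _ = _ := by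
            rw [hTfdec, Finset.sum_union hdis3, Finset.sum_union hdis12,
              hsum1, hsum2, hsum3]
    -- identify filters with P-filters
    have hf1 : Tfin.filter (fun c => wt c = 2 * i - 2) = Tfin.filter P1 := rfl
    have hf2 : Tfin.filter (fun c => wt c = 2 * i - 1) = Tfin.filter P2 := rfl
    have hf3 : Tfin.filter (fun c => wt c = 2 * i) = Tfin.filter P3 := rfl
    rw [hf1, hf2, hf3]
    set a1 := (Tfin.filter P1).card
    set a2 := (Tfin.filter P2).card
    set a3 := (Tfin.filter P3).card
    have e1 : a2 * c2 + a3 * c2 = c2 * (a2 + a3) := by ring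
    have e2 : 2 * c2 * (a2 + a3) = 2 * (c2 * (a2 + a3)) := by ring
    have e3 : a1 * L = L * a1 := by ring
    omega
end

section
/- Let C be a binary linear code with even minimum distance d, with coset leaders chosen as ⪯-minimum elements. If (1/2)·C(d, d/2) > |A_d(C)| − 1, then every codeword of weight d of C is contained in every trial set for C, where A_d(C) is the set of codewords of C of weight d and C(m,r) denotes the binomial coefficient. -/
namespace Aux
variable {n : ℕ}

lemma mem_supp {x : Fin n → ZMod 2} {i : Fin n} : i ∈ supp x ↔ x i ≠ 0 := by
  simp [supp]

lemma eq_of_supp_eq {x y : Fin n → ZMod 2} (h : supp x = supp y) : x = y := by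
  funext i
  have h2 : ∀ a b : ZMod 2, (a ≠ 0 ↔ b ≠ 0) → a = b := by decide
  exact h2 _ _ (by rw [← mem_supp (x := x), ← mem_supp (x := y), h])

lemma add_add_cancel (x y : Fin n → ZMod 2) : x + y + y = x := by
  funext i
  have h2 : ∀ a b : ZMod 2, a + b + b = a := by decide
  exact h2 _ _

lemma supp_add (x y : Fin n → ZMod 2) : supp (x + y) = symmDiff (supp x) (supp y) := by
  ext i
  simp only [mem_supp, Finset.mem_symmDiff, mem_supp, Pi.add_apply]
  have h2 : ∀ a b : ZMod 2, (a + b ≠ 0 ↔ (a ≠ 0 ∧ ¬ b ≠ 0) ∨ (b ≠ 0 ∧ ¬ a ≠ 0)) := by decide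
  exact h2 _ _

lemma supp_zero : supp (0 : Fin n → ZMod 2) = ∅ := by simp [supp]

lemma wt_pos {x : Fin n → ZMod 2} (hx : x ≠ 0) : 0 < wt x := by
  rcases Finset.eq_empty_or_nonempty (supp x) with h | h
  · exact absurd (eq_of_supp_eq (h.trans supp_zero.symm)) hx
  · exact Finset.card_pos.mpr h

lemma wt_add_le (x y : Fin n → ZMod 2) : wt (x + y) ≤ wt x + wt y := by
  unfold wt
  rw [supp_add, symmDiff_def]
  exact (Finset.card_union_le _ _).trans
    (Nat.add_le_add (Finset.card_le_card Finset.sdiff_subset)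
      (Finset.card_le_card Finset.sdiff_subset))

lemma wt_triangle (x y : Fin n → ZMod 2) : wt x ≤ wt (x + y) + wt y := by
  conv_lhs => rw [← add_add_cancel x y]
  exact wt_add_le _ _

def nv (s : Finset (Fin n)) : ℕ := ∑ i ∈ s, 2 ^ (n - 1 - (i : ℕ))

lemma nval_eq_nv (x : Fin n → ZMod 2) : nval x = nv (supp x) := by
  unfold nval nv supp
  rw [Finset.sum_filter]
  refine Finset.sum_congr rfl fun i _ => ?_
  have h2 : ∀ a : ZMod 2, (a.val : ℕ) = if a ≠ 0 then 1 else 0 := by decide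
  rw [h2]
  split <;> simp

lemma sum_range_two_pow_lt (m : ℕ) : ∑ k ∈ Finset.range m, 2 ^ k < 2 ^ m := by
  induction m with
  | zero => simp
  | succ m ih =>
    rw [Finset.sum_range_succ]
    have : (2:ℕ) ^ (m+1) = 2 ^ m + 2 ^ m := by ring
    omega

lemma nv_lt {s t : Finset (Fin n)} {l : Fin n} (hs : l ∈ s) (ht : ∀ i ∈ t, l < i) :
    nv t < nv s := by
  have hinj : ∀ x ∈ t, ∀ y ∈ t, n - 1 - (x : ℕ) = n - 1 - (y : ℕ) → x = y := by
    intro i _ j _ hij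
    have := i.isLt; have := j.isLt
    exact Fin.ext (by omega)
  have h1 : nv t = ∑ k ∈ t.image (fun i : Fin n => n - 1 - (i : ℕ)), 2 ^ k := by
    unfold nv
    rw [Finset.sum_image hinj]
  have h2 : t.image (fun i : Fin n => n - 1 - (i : ℕ)) ⊆ Finset.range (n - 1 - (l : ℕ)) := by
    intro k hk
    simp only [Finset.mem_image] at hk
    obtain ⟨i, hi, rfl⟩ := hk
    have := i.isLt; have := l.isLt
    have hli : (l : ℕ) < (i : ℕ) := ht i hi
    exact Finset.mem_range.mpr (by omega)
  calc nv t = _ := h1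
    _ ≤ ∑ k ∈ Finset.range (n - 1 - (l : ℕ)), 2 ^ k :=
        Finset.sum_le_sum_of_subset h2
    _ < 2 ^ (n - 1 - (l : ℕ)) := sum_range_two_pow_lt _
    _ ≤ nv s := by
        unfold nv
        exact Finset.single_le_sum (f := fun i : Fin n => 2 ^ (n - 1 - (i : ℕ)))
          (fun i _ => Nat.zero_le _) hs

def indv (s : Finset (Fin n)) : Fin n → ZMod 2 := fun i => if i ∈ s then 1 else 0

lemma supp_indv (s : Finset (Fin n)) : supp (indv s) = s := by
  ext i
  rw [mem_supp]
  unfold indv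
  by_cases h : i ∈ s <;> simp [h]

lemma card_symmDiff (s t : Finset (Fin n)) :
    (symmDiff s t).card = (s \ t).card + (t \ s).card := by
  rw [symmDiff_def]
  exact Finset.card_union_of_disjoint (disjoint_sdiff_sdiff)

lemma card_sdiff_inter (s t : Finset (Fin n)) :
    (s \ t).card + (s ∩ t).card = s.card := Finset.card_sdiff_add_card_inter s t

lemma symmDiff_of_subset {s t : Finset (Fin n)} (h : s ⊆ t) :
    symmDiff s t = t \ s := by
  ext i
  simp only [Finset.mem_symmDiff, Finset.mem_sdiff]
  constructor
  · rintro (⟨h1, h2⟩ | h1)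
    · exact absurd (h h1) h2
    · exact h1
  · exact fun h1 => Or.inr h1

lemma ple_refl (x : Fin n → ZMod 2) : ple x x := Or.inr ⟨rfl, le_rfl⟩

/-- Lemma A: if v is a larger half of a nonzero codeword c' and wt v = m with d = 2m
the minimum distance, then wt c' = 2m and supp v ⊆ supp c'. -/
lemma lemA {C : Submodule (ZMod 2) (Fin n → ZMod 2)} {m : ℕ}
    (hmin : ∀ c ∈ C, c ≠ 0 → 2 * m ≤ wt c)
    {c' v : Fin n → ZMod 2} (hc' : c' ∈ C) (hc0 : c' ≠ 0)
    (hv : wt v = m) (hlh : plt (v + c') v) :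
    wt c' = 2 * m ∧ supp v ⊆ supp c' := by
  have hwle : wt (v + c') ≤ wt v := by
    rcases hlh.1 with h | h
    · exact le_of_lt h
    · exact le_of_eq h.1
  have htri : wt c' ≤ wt (c' + v) + wt v := wt_triangle c' v
  have hcv : c' + v = v + c' := add_comm _ _
  have hle : wt c' ≤ 2 * m := by rw [hcv] at htri; omega
  have hge : 2 * m ≤ wt c' := hmin c' hc' hc0
  have hwc : wt c' = 2 * m := le_antisymm hle hge
  refine ⟨hwc, ?_⟩
  -- supp c' = supp (v + c') ∆ supp v
  have hsupp : supp c' = symmDiff (supp (v + c')) (supp v) := by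
    have hvc : (v + c') + v = c' := by rw [add_comm v c', add_add_cancel]
    conv_lhs => rw [← hvc]
    rw [supp_add]
  set s := supp v with hs
  set w := supp (v + c') with hw
  have h1 : (s \ w).card + (s ∩ w).card = s.card := card_sdiff_inter s w
  have h2 : (w \ s).card + (w ∩ s).card = w.card := card_sdiff_inter w s
  have h3 : (symmDiff w s).card = (w \ s).card + (s \ w).card := card_symmDiff w s
  have hint : (s ∩ w).card = 0 := by
    have hwc2 : (symmDiff w s).card = 2 * m := by rw [← hsupp]; exact hwc
    have hcomm : (w ∩ s).card = (s ∩ w).card := by rw [Finset.inter_comm]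
    have hsc : s.card = m := hv
    have hwcard : w.card ≤ m := by
      rw [hw]
      unfold wt at hwle hv
      omega
    omega
  intro i hi
  have hiw : i ∉ w := by
    intro hiw
    have : i ∈ s ∩ w := Finset.mem_inter.mpr ⟨hi, hiw⟩
    rw [Finset.card_eq_zero] at hint
    simp [hint] at this
  rw [hsupp]
  exact Finset.mem_symmDiff.mpr (Or.inr ⟨hi, hiw⟩)

/-- Lemma C: two distinct weight-2m codewords intersect in at most m coordinates. -/
lemma lemC {C : Submodule (ZMod 2) (Fin n → ZMod 2)} {m : ℕ}
    (hmin : ∀ c ∈ C, c ≠ 0 → 2 * m ≤ wt c)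
    {c1 c2 : Fin n → ZMod 2} (h1 : c1 ∈ C) (h2 : c2 ∈ C) (hne : c1 ≠ c2)
    (hw1 : wt c1 = 2 * m) (hw2 : wt c2 = 2 * m) :
    (supp c1 ∩ supp c2).card ≤ m := by
  have hadd : c1 + c2 ∈ C := C.add_mem h1 h2
  have hne0 : c1 + c2 ≠ 0 := by
    intro h
    apply hne
    have h2' := add_add_cancel c1 c2
    rw [h, zero_add] at h2'
    exact h2'.symm
  have hge : 2 * m ≤ wt (c1 + c2) := hmin _ hadd hne0
  have hsupp : wt (c1 + c2) = (symmDiff (supp c1) (supp c2)).card := by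
    unfold wt; rw [supp_add]
  have h3 := card_symmDiff (supp c1) (supp c2)
  have h4 := card_sdiff_inter (supp c1) (supp c2)
  have h5 := card_sdiff_inter (supp c2) (supp c1)
  have h6 : (supp c2 ∩ supp c1).card = (supp c1 ∩ supp c2).card := by
    rw [Finset.inter_comm]
  unfold wt at hw1 hw2
  omega

/-- Lemma B: the indicator of an m-subset of supp c containing the minimum of
supp c (c a weight-2m codeword, 2m the minimum distance) is in M1. -/
lemma lemB {C : Submodule (ZMod 2) (Fin n → ZMod 2)} {m : ℕ} (hm : 0 < m)
    (hmin : ∀ c ∈ C, c ≠ 0 → 2 * m ≤ wt c)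
    {c : Fin n → ZMod 2} (hcC : c ∈ C) (hwc : wt c = 2 * m)
    {s : Finset (Fin n)} (hsub : s ⊆ supp c) (hcard : s.card = m)
    (hne : (supp c).Nonempty) (hl : (supp c).min' hne ∈ s) :
    indv s ∈ M1 C := by
  set l := (supp c).min' hne with hldef
  -- basic facts
  have hsuppadd : supp (indv s + c) = supp c \ s := by
    rw [supp_add, supp_indv, symmDiff_of_subset hsub]
  have hwadd : wt (indv s + c) = m := by
    unfold wt
    rw [hsuppadd, Finset.card_sdiff_of_subset hsub, hcard]
    unfold wt at hwc
    omega
  have hwind : wt (indv s) = m := by unfold wt; rw [supp_indv]; exact hcard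
  have hnlt : nval (indv s + c) < nval (indv s) := by
    rw [nval_eq_nv, nval_eq_nv, supp_indv, hsuppadd]
    refine nv_lt hl ?_
    intro i hi
    rw [Finset.mem_sdiff] at hi
    refine lt_of_le_of_ne (Finset.min'_le _ _ hi.1) ?_
    intro h
    exact hi.2 (h ▸ hl)
  have hnple : ¬ ple (indv s) (indv s + c) := by
    unfold ple
    push_neg
    exact ⟨by omega, fun _ => by omega⟩
  constructor
  · -- indv s ∈ E1 C
    intro hcl
    refine hnple (hcl (indv s + c) ?_)
    have h3 : (indv s + c) + indv s = c := by rw [add_comm (indv s) c, add_add_cancel]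
    rw [h3]
    exact hcC
  · -- minimality
    intro u hu hcov
    have hcov2 : supp u ⊆ s := by rw [← supp_indv s]; exact hcov
    simp only [E1, Set.mem_setOf_eq, IsCosetLeader] at hu
    push_neg at hu
    obtain ⟨w, hwC, hnple2⟩ := hu
    set c' := w + u with hc'def
    have hc'C : c' ∈ C := hwC
    have hc'0 : c' ≠ 0 := by
      intro h
      apply hnple2
      have h2 : w = u := by
        have h3 := add_add_cancel w u
        rw [← hc'def, h, zero_add] at h3
        exact h3.symm
      rw [← h2]
      exact ple_refl w
    have hwu : w = c' + u := by
      have h3 := add_add_cancel w u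
      rw [← hc'def] at h3
      exact h3.symm
    have hwwle : wt w ≤ wt u := by
      by_contra h
      exact hnple2 (Or.inl (by omega))
    have hcard_u : wt u ≤ m := by
      unfold wt
      calc (supp u).card ≤ s.card := Finset.card_le_card hcov2
        _ = m := hcard
    have htri : wt c' ≤ wt (c' + u) + wt u := wt_triangle c' u
    have hge : 2 * m ≤ wt c' := hmin c' hc'C hc'0
    have hwu_eq : wt u = m := by rw [hwu] at hwwle; omega
    -- supp u = s
    have hsu : supp u = s := by
      apply Finset.eq_of_subset_of_card_le hcov2
      rw [hcard]
      unfold wt at hwu_eq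
      omega
    exact eq_of_supp_eq (by rw [hsu, supp_indv])

/-- counting: subsets of A of size k+1 containing a fixed a ∈ A. -/
lemma card_powersetCard_mem {α : Type*} [DecidableEq α] (A : Finset α) (a : α)
    (ha : a ∈ A) (k : ℕ) :
    ((A.powersetCard (k+1)).filter (fun s => a ∈ s)).card
      = (A.card - 1).choose k := by
  rw [← Finset.card_erase_of_mem ha, ← Finset.card_powersetCard]
  apply Finset.card_nbij' (fun s => s.erase a) (fun t => insert a t)
  · intro s hs
    obtain ⟨hs1, hs2⟩ := Finset.mem_filter.mp hs
    obtain ⟨hs3, hs4⟩ := Finset.mem_powersetCard.mp hs1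
    rw [Finset.mem_coe, Finset.mem_powersetCard]
    exact ⟨Finset.erase_subset_erase a hs3,
      by rw [Finset.card_erase_of_mem hs2, hs4]; omega⟩
  · intro t ht
    obtain ⟨ht1, ht2⟩ := Finset.mem_powersetCard.mp ht
    have hat : a ∉ t := fun h => (Finset.mem_erase.mp (ht1 h)).1 rfl
    rw [Finset.mem_coe, Finset.mem_filter, Finset.mem_powersetCard]
    refine ⟨⟨?_, ?_⟩, Finset.mem_insert_self a t⟩
    · intro x hx
      rcases Finset.mem_insert.mp hx with rfl | hx
      · exact ha
      · exact (Finset.mem_erase.mp (ht1 hx)).2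
    · rw [Finset.card_insert_of_notMem hat, ht2]
  · intro s hs
    exact Finset.insert_erase (Finset.mem_filter.mp hs).2
  · intro t ht
    obtain ⟨ht1, _⟩ := Finset.mem_powersetCard.mp ht
    have hat : a ∉ t := fun h => (Finset.mem_erase.mp (ht1 h)).1 rfl
    exact Finset.erase_insert hat

lemma two_choose (m : ℕ) (hm : 0 < m) :
    2 * ((2 * m - 1).choose (m - 1)) = (2 * m).choose m := by
  obtain ⟨m, rfl⟩ : ∃ k, m = k + 1 := ⟨m - 1, by omega⟩
  have h1 : 2 * (m + 1) = (2 * m + 1) + 1 := by ring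
  have h2 : 2 * (m + 1) - 1 = 2 * m + 1 := by omega
  have h3 : m + 1 - 1 = m := by omega
  rw [h1]
  rw [show (2 * m + 1 + 1 - 1) = 2 * m + 1 from by omega,
    show (m + 1 - 1) = m from by omega, Nat.choose_succ_succ' (2 * m + 1) m]
  have h4 : (2 * m + 1).choose (m + 1) = (2 * m + 1).choose m := by
    rw [← Nat.choose_symm (by omega : m + 1 ≤ 2 * m + 1)]
    congr 1
    omega
  rw [h4]
  ring

end Aux


/-- for even d, if (1/2)·C(d,d/2) > |A_d(C)| − 1, then every
weight-d codeword lies in every trial set for C. -/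
theorem stmt18 {n : ℕ} (C : Submodule (ZMod 2) (Fin n → ZMod 2)) (d : ℕ)
    (hd : HasMinDist C d) (heven : Even d)
    (hcond : (1 / 2 : ℚ) * (Nat.choose d (d / 2) : ℚ) >
      ((Aw (C : Set (Fin n → ZMod 2)) d).ncard : ℚ) - 1) :
    ∀ T : Set (Fin n → ZMod 2), IsTrialSet C T →
      Aw (C : Set (Fin n → ZMod 2)) d ⊆ T := by
  classical
  intro T hT c hc
  by_contra hcT
  obtain ⟨hcC, hwc⟩ := hc
  obtain ⟨⟨c0, hc0C, hc0ne, hc0w⟩, hmind⟩ := hd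
  obtain ⟨m0, hm0⟩ := heven
  have hdpos : 0 < d := hc0w ▸ Aux.wt_pos hc0ne
  have hd2 : d = 2 * m0 := by omega
  have hm : 0 < m0 := by omega
  have hmin : ∀ x ∈ C, x ≠ 0 → 2 * m0 ≤ wt x := fun x hx hx0 => hd2 ▸ hmind x hx hx0
  have hwc2 : wt c = 2 * m0 := by omega
  have hsne : (supp c).Nonempty := by
    rw [← Finset.card_pos]
    unfold wt at hwc2
    omega
  set l := (supp c).min' hsne with hl
  set S := (Finset.powersetCard m0 (supp c)).filter (fun s => l ∈ s) with hS
  have hsuppcard : (supp c).card = 2 * m0 := hwc2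
  have hcardS : S.card = (2 * m0 - 1).choose (m0 - 1) := by
    obtain ⟨k, hk⟩ : ∃ k, m0 = k + 1 := ⟨m0 - 1, by omega⟩
    rw [hS, hk, Aux.card_powersetCard_mem (supp c) l ((supp c).min'_mem hsne) k,
      hsuppcard]
    congr 1 <;> omega
  set AdF := Finset.univ.filter (fun x : Fin n → ZMod 2 => x ∈ C ∧ wt x = d) with hAdF
  have hncard : (Aw (C : Set (Fin n → ZMod 2)) d).ncard = AdF.card := by
    have hAw : Aw (C : Set (Fin n → ZMod 2)) d = ↑AdF := by
      ext x
      simp [Aw, hAdF]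
    rw [hAw]
    exact Set.ncard_coe_finset _
  have hcAdF : c ∈ AdF := by
    rw [hAdF, Finset.mem_filter]
    exact ⟨Finset.mem_univ _, hcC, hwc⟩
  have hex : ∀ s ∈ S, ∃ c', c' ∈ T ∧ IsLH c' (Aux.indv s) := by
    intro s hs
    obtain ⟨hs1, hs2⟩ := Finset.mem_filter.mp hs
    obtain ⟨hsub, hcard⟩ := Finset.mem_powersetCard.mp hs1
    have hM1 : Aux.indv s ∈ M1 C := Aux.lemB hm hmin hcC hwc2 hsub hcard hsne hs2
    have hLH := hT.2 hM1
    simp only [LHset, Set.mem_iUnion] at hLH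
    obtain ⟨c', hc', hlh⟩ := hLH
    exact ⟨c', hc', hlh⟩
  set g : Finset (Fin n) → (Fin n → ZMod 2) :=
    fun s => if h : ∃ c', c' ∈ T ∧ IsLH c' (Aux.indv s) then h.choose else 0 with hg
  have hgspec : ∀ s ∈ S, g s ∈ T ∧ IsLH (g s) (Aux.indv s) := by
    intro s hs
    rw [hg]
    dsimp only
    rw [dif_pos (hex s hs)]
    exact (hex s hs).choose_spec
  have hgprop : ∀ s ∈ S, g s ∈ C ∧ wt (g s) = 2 * m0 ∧ s ⊆ supp (g s) ∧ g s ≠ c := by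
    intro s hs
    obtain ⟨hs1, hs2⟩ := Finset.mem_filter.mp hs
    obtain ⟨hsub, hcard⟩ := Finset.mem_powersetCard.mp hs1
    obtain ⟨hgT, hglh⟩ := hgspec s hs
    have hmem := hT.1 hgT
    have hgC : g s ∈ C := hmem.1
    have hg0 : g s ≠ 0 := hmem.2
    have hwind : wt (Aux.indv s) = m0 := by
      unfold wt
      rw [Aux.supp_indv]
      exact hcard
    obtain ⟨hwg, hsubg⟩ := Aux.lemA hmin hgC hg0 hwind hglh.1
    refine ⟨hgC, hwg, ?_, fun h => hcT (h ▸ hgT)⟩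
    intro i hi
    refine hsubg ?_
    rw [Aux.supp_indv]
    exact hi
  have hmaps : ∀ s ∈ S, g s ∈ AdF.erase c := by
    intro s hs
    obtain ⟨hgC, hwg, _, hgne⟩ := hgprop s hs
    rw [Finset.mem_erase, hAdF, Finset.mem_filter]
    exact ⟨hgne, Finset.mem_univ _, hgC, by omega⟩
  have hinj : Set.InjOn g ↑S := by
    intro s1 hs1 s2 hs2 heq
    rw [Finset.mem_coe] at hs1 hs2
    have key : ∀ s ∈ S, s = supp c ∩ supp (g s) := by
      intro s hs
      obtain ⟨hgC, hwg, hsubg, hgne⟩ := hgprop s hs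
      obtain ⟨hsp, _⟩ := Finset.mem_filter.mp hs
      obtain ⟨hsub, hcard⟩ := Finset.mem_powersetCard.mp hsp
      refine Finset.eq_of_subset_of_card_le (Finset.subset_inter hsub hsubg) ?_
      have hint := Aux.lemC hmin hcC hgC (fun h => hgne h.symm) hwc2 hwg
      omega
    rw [key s1 hs1, key s2 hs2, heq]
  have hcardle : S.card ≤ AdF.card - 1 := by
    have h1 := Finset.card_le_card_of_injOn g hmaps hinj
    rwa [Finset.card_erase_of_mem hcAdF] at h1
  have hA1 : 1 ≤ AdF.card := Finset.card_pos.mpr ⟨c, hcAdF⟩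
  have hdd : d / 2 = m0 := by omega
  rw [hncard, hdd, hd2, ← Aux.two_choose m0 hm] at hcond
  have hNle : ((2 * m0 - 1).choose (m0 - 1) : ℚ) ≤ (AdF.card : ℚ) - 1 := by
    have h2 : S.card ≤ AdF.card - 1 := hcardle
    rw [hcardS] at h2
    have h3 : ((2 * m0 - 1).choose (m0 - 1) : ℚ) ≤ ((AdF.card - 1 : ℕ) : ℚ) := by
      exact_mod_cast h2
    rwa [Nat.cast_sub hA1] at h3
  push_cast at hcond
  linarith
end
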